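/- (Proposition 1) Let d ≥ 1, s₁, s₂, ω ∈ ℝ, and set N₀ = N₀(d, ω, s₁, s₂) := d + ω₊ + (1/2)(|s₁+ω| + |s₂+ω|), where ω₊ := max(ω,0). Suppose the tensor Θ: ℤ^d × ℤ^d × ℤ^d → ℂ satisfies ‖Θ‖_{ω,N} < ∞ for some N > N₀. Then for any 1 ≤ p, q, r ≤ ∞ with 1/p + 1/q = 1/r, the discrete bilinear operator 𝒯_Θ is bounded from ℓ^p_{s₁+ω}(ℤ^d) × ℓ^q_{s₂+ω}(ℤ^d) to ℓ^r_{s₁+s₂}(ℤ^d); more precisely, there exists C > 0 (depending only on d, ω, s₁, s₂, N, p, q, r) such that ‖𝒯_Θ(f,g)‖_{ℓ^r_{s₁+s₂}} ≤ C ‖Θ‖_{ω,N} ‖f‖_{ℓ^p_{s₁+ω}} ‖g‖_{ℓ^q_{s₂+ω}} for all f ∈ ℓ^p_{s₁+ω}(ℤ^d) and g ∈ ℓ^q_{s₂+ω}(ℤ^d). -/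

import Mathlib

open scoped ENNReal NNReal BigOperators

noncomputable section

/-- The integer lattice `ℤ^d`. -/
abbrev Zd (d : ℕ) := Fin d → ℤ

/-- Euclidean norm `|j|` of an integer vector `j ∈ ℤ^d`. -/
def znorm {d : ℕ} (j : Zd d) : ℝ := Real.sqrt (∑ i, ((j i : ℝ)) ^ 2)

/-- Euclidean norm of a real vector. -/
def rnorm {d : ℕ} (x : Fin d → ℝ) : ℝ := Real.sqrt (∑ i, (x i) ^ 2)

/-- Japanese bracket `⟨x⟩ = (1 + x²)^{1/2}`. -/
def jb (x : ℝ) : ℝ := Real.sqrt (1 + x ^ 2)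

/-- The discrete bilinear operator `𝒯_Θ` (named `Tbil` here) associated with an infinite tensor `Θ`:
`(𝒯_Θ(f,g))_j = Σ_k Σ_ℓ Θ(j,k,ℓ) f_k g_ℓ`. -/
def Tbil {d : ℕ} (Θ : Zd d → Zd d → Zd d → ℂ) (f g : Zd d → ℂ) : Zd d → ℂ :=
  fun j => ∑' k, ∑' l, Θ j k l * f k * g l

/-- `ℓ^p`-type norm (extended-real valued) of a family of nonnegative extended reals,
with the usual modification (supremum) when `p = ∞`. -/
def nestNorm {ι : Type*} (p : ℝ≥0∞) (F : ι → ℝ≥0∞) : ℝ≥0∞ :=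
  if p = ∞ then ⨆ i, F i else (∑' i, F i ^ p.toReal) ^ (1 / p.toReal)

/-- The weighted `ℓ^p_s(ℤ^d)` norm `(Σ_k ⟨k⟩^{sp} |f_k|^p)^{1/p}`. -/
def wlpNorm {d : ℕ} (p : ℝ≥0∞) (s : ℝ) (f : Zd d → ℂ) : ℝ≥0∞ :=
  nestNorm p fun k => ENNReal.ofReal (jb (znorm k) ^ s * ‖f k‖)

/-- The `ℓ^p(ℤ^d)` norm. -/
def lpNorm {d : ℕ} (p : ℝ≥0∞) (f : Zd d → ℂ) : ℝ≥0∞ :=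
  nestNorm p fun k => ENNReal.ofReal ‖f k‖

/-- The tensor norm `‖Θ‖_{ω,N} = sup_{j,k,ℓ} |Θ(j,k,ℓ)| ⟨|j−k|+|j−ℓ|⟩^{2N} /
(⟨|j|+|k|⟩^ω ⟨|j|+|ℓ|⟩^ω)`. -/
def tensorNorm {d : ℕ} (ω N : ℝ) (Θ : Zd d → Zd d → Zd d → ℂ) : ℝ≥0∞ :=
  ⨆ j, ⨆ k, ⨆ l, ENNReal.ofReal
    (‖Θ j k l‖ * jb (znorm (j - k) + znorm (j - l)) ^ (2 * N) /
      (jb (znorm j + znorm k) ^ ω * jb (znorm j + znorm l) ^ ω))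

/-- The tensor norm `‖Θ‖_{ω₁,ω₂,N}`. -/
def tensorNorm2 {d : ℕ} (ω₁ ω₂ N : ℝ) (Θ : Zd d → Zd d → Zd d → ℂ) : ℝ≥0∞ :=
  ⨆ j, ⨆ k, ⨆ l, ENNReal.ofReal
    (‖Θ j k l‖ * jb (znorm (j - k) + znorm (j - l)) ^ (2 * N) /
      (jb (znorm j + znorm k) ^ ω₁ * jb (znorm j + znorm l) ^ ω₂))

/-- The tensor norm `‖Θ‖_{0,0,ω,N} = sup_{j,k,ℓ} |Θ(j,k,ℓ)| ⟨|j−k|+|j−ℓ|⟩^{2N} /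
⟨|j|+|k|+|ℓ|⟩^ω`. -/
def tensorNorm00 {d : ℕ} (ω N : ℝ) (Θ : Zd d → Zd d → Zd d → ℂ) : ℝ≥0∞ :=
  ⨆ j, ⨆ k, ⨆ l, ENNReal.ofReal
    (‖Θ j k l‖ * jb (znorm (j - k) + znorm (j - l)) ^ (2 * N) /
      jb (znorm j + znorm k + znorm l) ^ ω)

/-- The first bilinear commutator `[𝒯_Θ, b]₁(f,g) = 𝒯_Θ(bf, g) − b·𝒯_Θ(f,g)`. -/
def comm1 {d : ℕ} (Θ : Zd d → Zd d → Zd d → ℂ) (b f g : Zd d → ℂ) : Zd d → ℂ :=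
  fun j => Tbil Θ (fun k => b k * f k) g j - b j * Tbil Θ f g j

/-- The second bilinear commutator `[𝒯_Θ, b]₂(f,g) = 𝒯_Θ(f, bg) − b·𝒯_Θ(f,g)`. -/
def comm2 {d : ℕ} (Θ : Zd d → Zd d → Zd d → ℂ) (b f g : Zd d → ℂ) : Zd d → ℂ :=
  fun j => Tbil Θ f (fun l => b l * g l) j - b j * Tbil Θ f g j

/-- One-step finite difference in the variables `(j,k)`, with shift `v ∈ ℤ^d`:
`(D2 v Θ)(j,k,ℓ) = Θ(j+v, k+v, ℓ) − Θ(j,k,ℓ)`. -/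
def D2 {d : ℕ} (v : Zd d) (Θ : Zd d → Zd d → Zd d → ℂ) : Zd d → Zd d → Zd d → ℂ :=
  fun j k l => Θ (j + v) (k + v) l - Θ j k l

/-- One-step finite difference in the variables `(j,ℓ)`, with shift `v ∈ ℤ^d`:
`(D3 v Θ)(j,k,ℓ) = Θ(j+v, k, ℓ+v) − Θ(j,k,ℓ)`. -/
def D3 {d : ℕ} (v : Zd d) (Θ : Zd d → Zd d → Zd d → ℂ) : Zd d → Zd d → Zd d → ℂ :=
  fun j k l => Θ (j + v) k (l + v) - Θ j k l

/-- The iterated partial finite difference operator `Δ₂^α` for `α ∈ ℤ^d`: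
in direction `m`, `Δ_{2,m}^t = (Δ₂^{m, sign t})^{|t|}`. -/
def Delta2 {d : ℕ} (α : Zd d) (Θ : Zd d → Zd d → Zd d → ℂ) : Zd d → Zd d → Zd d → ℂ :=
  (List.finRange d).foldr
    (fun m F => (D2 (Pi.single m (Int.sign (α m))))^[(α m).natAbs] ∘ F) id Θ

/-- The iterated partial finite difference operator `Δ₃^β` for `β ∈ ℤ^d`. -/
def Delta3 {d : ℕ} (β : Zd d) (Θ : Zd d → Zd d → Zd d → ℂ) : Zd d → Zd d → Zd d → ℂ :=
  (List.finRange d).foldr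
    (fun m F => (D3 (Pi.single m (Int.sign (β m))))^[(β m).natAbs] ∘ F) id Θ

/-- `|α| = Σ_m |α_m|` for `α ∈ ℤ^d`. -/
def l1norm {d : ℕ} (α : Zd d) : ℝ := ∑ m, |(α m : ℝ)|

/-- The bilinear tensor class `BT^{ω,N}(ℤ^d)`:
`|Δ₂^α Δ₃^β Θ(j,k,ℓ)| ≤ C_{N,α,β} ⟨|j|+|k|+|ℓ|⟩^{ω−|α|−|β|} ⟨|j−k|+|j−ℓ|⟩^{−2N}`. -/
def BT {d : ℕ} (ω : ℝ) (N : ℕ) (Θ : Zd d → Zd d → Zd d → ℂ) : Prop :=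
  ∀ α β : Zd d, ∃ C : ℝ, 0 < C ∧ ∀ j k l : Zd d,
    ‖Delta2 α (Delta3 β Θ) j k l‖ ≤
      C * jb (znorm j + znorm k + znorm l) ^ (ω - l1norm α - l1norm β) *
        jb (znorm (j - k) + znorm (j - l)) ^ (-(2 * (N : ℝ)))

/-- The bilinear tensor class of order zero, `BT^0(ℤ^d) = ∪_{N > d} BT^{0,N}(ℤ^d)`. -/
def BT0 {d : ℕ} (Θ : Zd d → Zd d → Zd d → ℂ) : Prop :=
  ∃ N : ℕ, d < N ∧ BT 0 N Θ

/-- Directional derivative of a function on `ℝ^d × ℝ^d` in the direction `v`. -/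
def pDeriv {d : ℕ} (v : (Fin d → ℝ) × (Fin d → ℝ))
    (F : (Fin d → ℝ) × (Fin d → ℝ) → ℂ) : (Fin d → ℝ) × (Fin d → ℝ) → ℂ :=
  fun p => fderiv ℝ F p v

/-- Iterated partial derivative `∂_x^α` in the first group of variables. -/
def pdx {d : ℕ} (α : Fin d → ℕ) :
    ((Fin d → ℝ) × (Fin d → ℝ) → ℂ) → (Fin d → ℝ) × (Fin d → ℝ) → ℂ :=
  (List.finRange d).foldr (fun m G => (pDeriv (Pi.single m 1, 0))^[α m] ∘ G) id

/-- Iterated partial derivative `∂_y^β` in the second group of variables. -/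
def pdy {d : ℕ} (β : Fin d → ℕ) :
    ((Fin d → ℝ) × (Fin d → ℝ) → ℂ) → (Fin d → ℝ) × (Fin d → ℝ) → ℂ :=
  (List.finRange d).foldr (fun m G => (pDeriv (0, Pi.single m 1))^[β m] ∘ G) id

/-!
Peetre's inequality `⟨x⟩^σ ≤ 2^{|σ|/2} ⟨x - y⟩^{|σ|} ⟨y⟩^σ`, together with
`⟨|j| + |k|⟩^ω ≲ ⟨j - k⟩^{ω₊} ⟨j⟩^ω`, moves the weights `⟨j⟩^{s₁+s₂}` and
`⟨|j|+|k|⟩^ω ⟨|j|+|ℓ|⟩^ω` onto `k` and `ℓ`, at the cost of a factor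
`⟨j - k⟩^{|s₁+ω| + ω₊} ⟨j - ℓ⟩^{|s₂+ω| + ω₊}`. Since `N > N₀`, the off-diagonal decay
`⟨|j-k| + |j-ℓ|⟩^{-2N}` absorbs this factor and still leaves `⟨j - k⟩^{-τ} ⟨j - ℓ⟩^{-τ}` with
`τ > d`. So the weighted output is bounded pointwise by `(h ⋆ F)(j) (h ⋆ G)(j)` for the weighted
inputs `F`, `G` and the summable kernel `h = ⟨·⟩^{-τ}`; Hölder's inequality and Young's inequality
`‖h ⋆ F‖_p ≤ ‖h‖₁ ‖F‖_p` conclude.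
-/

lemma jb_pos (x : ℝ) : 0 < jb x := Real.sqrt_pos.2 (by positivity)

lemma jb_rpow_pos (x s : ℝ) : 0 < jb x ^ s := Real.rpow_pos_of_pos (jb_pos x) s

lemma one_le_jb (x : ℝ) : 1 ≤ jb x :=
  Real.le_sqrt_of_sq_le (by nlinarith [sq_nonneg x])

lemma le_jb (x : ℝ) : x ≤ jb x :=
  Real.le_sqrt_of_sq_le (by linarith)

lemma jb_le_jb {x y : ℝ} (hx : 0 ≤ x) (h : x ≤ y) : jb x ≤ jb y :=
  Real.sqrt_le_sqrt (by nlinarith)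

lemma jb_add_le (a b : ℝ) : jb (a + b) ≤ Real.sqrt 2 * jb a * jb b := by
  rw [jb, jb, jb, ← Real.sqrt_mul (by norm_num), ← Real.sqrt_mul (by positivity)]
  exact Real.sqrt_le_sqrt (by nlinarith [sq_nonneg (a * b - 1), sq_nonneg (a - b)])

lemma jb_two_mul_add_le (a b : ℝ) : jb (2 * a + b) ≤ 2 * Real.sqrt 2 * jb a * jb b := by
  have h8 : 2 * Real.sqrt 2 = Real.sqrt 8 := by
    rw [show (8 : ℝ) = 2 ^ 2 * 2 by norm_num, Real.sqrt_mul (by norm_num),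
      Real.sqrt_sq (by norm_num)]
  rw [h8, jb, jb, jb, ← Real.sqrt_mul (by norm_num), ← Real.sqrt_mul (by positivity)]
  exact Real.sqrt_le_sqrt (by nlinarith [sq_nonneg (a * b), sq_nonneg (2 * a - b)])

lemma rpow_le_rpow_abs_mul_rpow {x y K : ℝ} (hx : 0 < x) (hy : 0 < y) (hK : 0 ≤ K)
    (hxy : x ≤ K * y) (hyx : y ≤ K * x) (σ : ℝ) : x ^ σ ≤ K ^ |σ| * y ^ σ := by
  rcases le_or_gt 0 σ with hσ | hσ
  · rw [abs_of_nonneg hσ, ← Real.mul_rpow hK hy.le]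
    exact Real.rpow_le_rpow hx.le hxy hσ
  · rw [abs_of_neg hσ]
    have hinv : x⁻¹ ≤ K * y⁻¹ := by
      rw [← div_eq_mul_inv, le_div_iff₀ hy, inv_mul_le_iff₀ hx]
      linarith
    calc x ^ σ = x⁻¹ ^ (-σ) := by rw [Real.inv_rpow hx.le, Real.rpow_neg hx.le, inv_inv]
      _ ≤ (K * y⁻¹) ^ (-σ) := Real.rpow_le_rpow (by positivity) hinv (by linarith)
      _ = K ^ (-σ) * y ^ σ := by
          rw [Real.mul_rpow hK (by positivity), Real.inv_rpow hy.le, Real.rpow_neg hy.le, inv_inv]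

lemma jb_add_rpow_neg_le {u v a b : ℝ} (hu : 0 ≤ u) (hv : 0 ≤ v) (ha : 0 ≤ a) (hb : 0 ≤ b) :
    jb (u + v) ^ (-(a + b)) ≤ jb u ^ (-a) * jb v ^ (-b) := by
  rw [neg_add, Real.rpow_add (jb_pos _)]
  exact mul_le_mul
    (Real.rpow_le_rpow_of_nonpos (jb_pos u) (jb_le_jb hu (by linarith)) (by linarith))
    (Real.rpow_le_rpow_of_nonpos (jb_pos v) (jb_le_jb hv (by linarith)) (by linarith))
    (jb_rpow_pos _ _).le (jb_rpow_pos _ _).le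

section SeminormedAddCommGroup

variable {E : Type*} [SeminormedAddCommGroup E]

lemma jb_norm_rpow_le (x y : E) (σ : ℝ) :
    jb ‖x‖ ^ σ ≤ Real.sqrt 2 ^ |σ| * jb ‖x - y‖ ^ |σ| * jb ‖y‖ ^ σ := by
  have key : ∀ x y : E, jb ‖x‖ ≤ Real.sqrt 2 * jb ‖x - y‖ * jb ‖y‖ := fun x y =>
    calc jb ‖x‖ ≤ jb (‖y‖ + ‖x - y‖) := jb_le_jb (norm_nonneg x) (norm_le_norm_add_norm_sub' x y)
      _ ≤ Real.sqrt 2 * jb ‖x - y‖ * jb ‖y‖ := by linarith [jb_add_le ‖y‖ ‖x - y‖]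
  rw [← Real.mul_rpow (by positivity) (jb_pos _).le]
  refine rpow_le_rpow_abs_mul_rpow (jb_pos _) (jb_pos _) (by positivity [jb_pos ‖x - y‖])
    (key x y) ?_ σ
  simpa [norm_sub_rev] using key y x

lemma jb_add_norm_rpow_le (x y : E) (ω : ℝ) :
    jb (‖x‖ + ‖y‖) ^ ω ≤
      (2 * Real.sqrt 2) ^ max ω 0 * jb ‖x - y‖ ^ max ω 0 * jb ‖x‖ ^ ω := by
  rcases le_or_gt 0 ω with hω | hω
  · rw [max_eq_left hω, ← Real.mul_rpow (by positivity) (jb_pos _).le,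
      ← Real.mul_rpow (by positivity [jb_pos ‖x - y‖]) (jb_pos _).le]
    refine Real.rpow_le_rpow (jb_pos _).le ?_ hω
    calc jb (‖x‖ + ‖y‖) ≤ jb (2 * ‖x‖ + ‖x - y‖) := by
          refine jb_le_jb (by positivity) ?_
          linarith [norm_le_norm_add_norm_sub' y x, norm_sub_rev x y]
      _ ≤ 2 * Real.sqrt 2 * jb ‖x - y‖ * jb ‖x‖ := by
          linarith [jb_two_mul_add_le ‖x‖ ‖x - y‖]
  · rw [max_eq_right hω.le, Real.rpow_zero, Real.rpow_zero, one_mul, one_mul]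
    exact Real.rpow_le_rpow_of_nonpos (jb_pos _)
      (jb_le_jb (norm_nonneg x) (le_add_of_nonneg_right (norm_nonneg y))) hω.le

lemma jb_rpow_mul_jb_add_rpow_le (x y : E) (s ω τ : ℝ) :
    jb ‖x‖ ^ s * jb (‖x‖ + ‖y‖) ^ ω * jb ‖x - y‖ ^ (-(|s + ω| + max ω 0 + τ)) ≤
      Real.sqrt 2 ^ |s + ω| * (2 * Real.sqrt 2) ^ max ω 0 *
        (jb ‖y‖ ^ (s + ω) * jb ‖x - y‖ ^ (-τ)) := by
  set c := jb ‖x - y‖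
  have hc : 0 < c := jb_pos _
  have hx := jb_pos ‖x‖
  have := jb_pos ‖y‖
  have := jb_pos (‖x‖ + ‖y‖)
  calc jb ‖x‖ ^ s * jb (‖x‖ + ‖y‖) ^ ω * c ^ (-(|s + ω| + max ω 0 + τ))
      ≤ jb ‖x‖ ^ s * ((2 * Real.sqrt 2) ^ max ω 0 * c ^ max ω 0 * jb ‖x‖ ^ ω) *
          c ^ (-(|s + ω| + max ω 0 + τ)) := by
        gcongr
        exact jb_add_norm_rpow_le x y ω
    _ = (2 * Real.sqrt 2) ^ max ω 0 * jb ‖x‖ ^ (s + ω) *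
          (c ^ max ω 0 * c ^ (-(|s + ω| + max ω 0 + τ))) := by
        rw [Real.rpow_add hx]; ring
    _ ≤ (2 * Real.sqrt 2) ^ max ω 0 *
          (Real.sqrt 2 ^ |s + ω| * c ^ |s + ω| * jb ‖y‖ ^ (s + ω)) *
          (c ^ max ω 0 * c ^ (-(|s + ω| + max ω 0 + τ))) := by
        gcongr
        exact jb_norm_rpow_le x y (s + ω)
    _ = Real.sqrt 2 ^ |s + ω| * (2 * Real.sqrt 2) ^ max ω 0 * (jb ‖y‖ ^ (s + ω) *
          (c ^ |s + ω| * c ^ max ω 0 * c ^ (-(|s + ω| + max ω 0 + τ)))) := by ring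
    _ = Real.sqrt 2 ^ |s + ω| * (2 * Real.sqrt 2) ^ max ω 0 *
          (jb ‖y‖ ^ (s + ω) * c ^ (-τ)) := by
        rw [← Real.rpow_add hc, ← Real.rpow_add hc]; ring_nf

lemma exists_kernel_bound {s₁ s₂ ω N τ : ℝ} (hτ : 0 ≤ τ)
    (hN : |s₁ + ω| + |s₂ + ω| + 2 * max ω 0 + 2 * τ ≤ 2 * N) :
    ∃ C, 0 < C ∧ ∀ x y z : E,
      jb ‖x‖ ^ (s₁ + s₂) * (jb (‖x‖ + ‖y‖) ^ ω * jb (‖x‖ + ‖z‖) ^ ω *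
          jb (‖x - y‖ + ‖x - z‖) ^ (-(2 * N))) ≤
        C * (jb ‖y‖ ^ (s₁ + ω) * jb ‖x - y‖ ^ (-τ)) *
          (jb ‖z‖ ^ (s₂ + ω) * jb ‖x - z‖ ^ (-τ)) := by
  refine ⟨(Real.sqrt 2 ^ |s₁ + ω| * (2 * Real.sqrt 2) ^ max ω 0) *
    (Real.sqrt 2 ^ |s₂ + ω| * (2 * Real.sqrt 2) ^ max ω 0), by positivity, fun x y z => ?_⟩
  set a := |s₁ + ω| + max ω 0 + τ
  set b := |s₂ + ω| + max ω 0 + τ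
  have := jb_pos ‖x‖
  have := jb_pos (‖x‖ + ‖y‖)
  have := jb_pos (‖x‖ + ‖z‖)
  have := jb_pos ‖x - y‖
  have := jb_pos ‖x - z‖
  have := jb_pos ‖y‖
  have hdecay : jb (‖x - y‖ + ‖x - z‖) ^ (-(2 * N)) ≤ jb ‖x - y‖ ^ (-a) * jb ‖x - z‖ ^ (-b) :=
    calc jb (‖x - y‖ + ‖x - z‖) ^ (-(2 * N)) ≤ jb (‖x - y‖ + ‖x - z‖) ^ (-(a + b)) :=
          Real.rpow_le_rpow_of_exponent_le (one_le_jb _) (by linarith)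
      _ ≤ _ := jb_add_rpow_neg_le (norm_nonneg _) (norm_nonneg _) (by positivity) (by positivity)
  calc jb ‖x‖ ^ (s₁ + s₂) * (jb (‖x‖ + ‖y‖) ^ ω * jb (‖x‖ + ‖z‖) ^ ω *
          jb (‖x - y‖ + ‖x - z‖) ^ (-(2 * N)))
      ≤ jb ‖x‖ ^ (s₁ + s₂) * (jb (‖x‖ + ‖y‖) ^ ω * jb (‖x‖ + ‖z‖) ^ ω *
          (jb ‖x - y‖ ^ (-a) * jb ‖x - z‖ ^ (-b))) := by gcongr
    _ = (jb ‖x‖ ^ s₁ * jb (‖x‖ + ‖y‖) ^ ω * jb ‖x - y‖ ^ (-a)) *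
          (jb ‖x‖ ^ s₂ * jb (‖x‖ + ‖z‖) ^ ω * jb ‖x - z‖ ^ (-b)) := by
        rw [Real.rpow_add (jb_pos _)]; ring
    _ ≤ (Real.sqrt 2 ^ |s₁ + ω| * (2 * Real.sqrt 2) ^ max ω 0 *
          (jb ‖y‖ ^ (s₁ + ω) * jb ‖x - y‖ ^ (-τ))) *
        (Real.sqrt 2 ^ |s₂ + ω| * (2 * Real.sqrt 2) ^ max ω 0 *
          (jb ‖z‖ ^ (s₂ + ω) * jb ‖x - z‖ ^ (-τ))) :=
        mul_le_mul (jb_rpow_mul_jb_add_rpow_le x y s₁ ω τ) (jb_rpow_mul_jb_add_rpow_le x z s₂ ω τ)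
          (by positivity) (by positivity)
    _ = _ := by ring

end SeminormedAddCommGroup

section SequenceNorms

variable {ι : Type*}

lemma nestNorm_mono (p : ℝ≥0∞) {F G : ι → ℝ≥0∞} (h : ∀ i, F i ≤ G i) :
    nestNorm p F ≤ nestNorm p G := by
  unfold nestNorm
  split_ifs
  · exact iSup_mono h
  · gcongr with i
    exact h i

lemma nestNorm_const_mul {p : ℝ≥0∞} (hp : p ≠ 0) (c : ℝ≥0∞) (F : ι → ℝ≥0∞) :
    nestNorm p (fun i => c * F i) = c * nestNorm p F := by
  unfold nestNorm
  split_ifs with hpt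
  · exact (ENNReal.mul_iSup c F).symm
  · have hP : 0 < p.toReal := ENNReal.toReal_pos hp hpt
    simp_rw [ENNReal.mul_rpow_of_nonneg _ _ hP.le, ENNReal.tsum_mul_left,
      ENNReal.mul_rpow_of_nonneg _ _ (one_div_pos.2 hP).le, ← ENNReal.rpow_mul,
      mul_one_div_cancel hP.ne', ENNReal.rpow_one]

lemma nestNorm_mul_le_iSup_mul {r : ℝ≥0∞} (hr : r ≠ 0) (A B : ι → ℝ≥0∞) :
    nestNorm r (fun i => A i * B i) ≤ (⨆ i, A i) * nestNorm r B := by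
  rw [← nestNorm_const_mul hr]
  exact nestNorm_mono r fun i => mul_le_mul_left (le_iSup A i) _

lemma nestNorm_mul_le [Countable ι] {p q r : ℝ≥0∞} (hp : p ≠ 0) (hq : q ≠ 0)
    (hpqr : p⁻¹ + q⁻¹ = r⁻¹) (A B : ι → ℝ≥0∞) :
    nestNorm r (fun i => A i * B i) ≤ nestNorm p A * nestNorm q B := by
  have hr : r ≠ 0 := by
    rintro rfl
    simp_all
  by_cases hpt : p = ∞
  · obtain rfl : q = r := by simpa [hpt] using hpqr
    simpa [nestNorm, hpt] using nestNorm_mul_le_iSup_mul hr A B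
  by_cases hqt : q = ∞
  · obtain rfl : p = r := by simpa [hqt] using hpqr
    simpa [nestNorm, hqt, mul_comm] using nestNorm_mul_le_iSup_mul hr B A
  have hrt : r ≠ ∞ := by
    rintro rfl
    simp_all
  have hP := ENNReal.toReal_pos hp hpt
  have hQ := ENNReal.toReal_pos hq hqt
  have hR := ENNReal.toReal_pos hr hrt
  have hPQR : 1 / r.toReal = 1 / p.toReal + 1 / q.toReal := by
    have := congrArg ENNReal.toReal hpqr
    rwa [ENNReal.toReal_add (by simpa using hp) (by simpa using hq), ENNReal.toReal_inv,
      ENNReal.toReal_inv, ENNReal.toReal_inv, eq_comm, ← one_div, ← one_div, ← one_div] at this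
  have hRP : r.toReal < p.toReal := by
    rw [← one_div_lt_one_div hP hR, hPQR]
    linarith [one_div_pos.2 hQ]
  let _ : MeasurableSpace ι := ⊤
  simpa [nestNorm, hpt, hqt, hrt, MeasureTheory.lintegral_count] using
    ENNReal.lintegral_Lp_mul_le_Lq_mul_Lr hR hRP hPQR MeasureTheory.Measure.count
      (measurable_from_top (f := A)).aemeasurable (measurable_from_top (f := B)).aemeasurable


lemma ENNReal.inner_le_weight_mul_Lp_tsum {p : ℝ} (hp : 1 ≤ p) (w f : ι → ℝ≥0∞) :
    ∑' i, w i * f i ≤ (∑' i, w i) ^ (1 - p⁻¹) * (∑' i, w i * f i ^ p) ^ p⁻¹ := by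
  have h1 : 0 ≤ 1 - p⁻¹ := sub_nonneg.2 (inv_le_one_of_one_le₀ hp)
  refine ENNReal.summable.tsum_le_of_sum_le fun s => ?_
  calc ∑ i ∈ s, w i * f i
      ≤ (∑ i ∈ s, w i) ^ (1 - p⁻¹) * (∑ i ∈ s, w i * f i ^ p) ^ p⁻¹ :=
        ENNReal.inner_le_weight_mul_Lp_of_nonneg s hp w f
    _ ≤ _ := by gcongr <;> exact ENNReal.sum_le_tsum s

end SequenceNorms

def discreteConv {G : Type*} [Sub G] (H F : G → ℝ≥0∞) (j : G) : ℝ≥0∞ :=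
  ∑' k, H (j - k) * F k

lemma nestNorm_discreteConv_le {G : Type*} [AddGroup G] {p : ℝ≥0∞} (hp : 1 ≤ p)
    (H F : G → ℝ≥0∞) :
    nestNorm p (discreteConv H F) ≤ (∑' v, H v) * nestNorm p F := by
  set S := ∑' v, H v
  have hrow : ∀ j, ∑' k, H (j - k) = S := fun j => (Equiv.subLeft j).tsum_eq H
  have hcol : ∀ k, ∑' j, H (j - k) = S := fun k => (Equiv.subRight k).tsum_eq H
  by_cases hpt : p = ∞
  · simp only [nestNorm, hpt, if_true]
    refine iSup_le fun j => ?_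
    calc discreteConv H F j ≤ ∑' k, H (j - k) * ⨆ i, F i :=
          ENNReal.tsum_le_tsum fun k => by gcongr; exact le_iSup F k
      _ = S * ⨆ i, F i := by rw [ENNReal.tsum_mul_right, hrow]
  set P := p.toReal
  have hP : 1 ≤ P := by simpa using ENNReal.toReal_mono hpt hp
  have hpoint : ∀ j, discreteConv H F j ^ P ≤ S ^ (P - 1) * ∑' k, H (j - k) * F k ^ P := by
    intro j
    calc discreteConv H F j ^ P
        ≤ (S ^ (1 - P⁻¹) * (∑' k, H (j - k) * F k ^ P) ^ P⁻¹) ^ P := by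
          gcongr
          simpa only [discreteConv, hrow] using
            ENNReal.inner_le_weight_mul_Lp_tsum hP (fun k => H (j - k)) F
      _ = S ^ (P - 1) * ∑' k, H (j - k) * F k ^ P := by
          rw [ENNReal.mul_rpow_of_nonneg _ _ (by positivity), ← ENNReal.rpow_mul,
            ← ENNReal.rpow_mul, inv_mul_cancel₀ (by positivity), ENNReal.rpow_one, sub_mul,
            inv_mul_cancel₀ (by positivity), one_mul]
  simp only [nestNorm, hpt, if_false]
  calc (∑' j, discreteConv H F j ^ P) ^ (1 / P)
      ≤ (∑' j, S ^ (P - 1) * ∑' k, H (j - k) * F k ^ P) ^ (1 / P) := by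
        gcongr with j
        exact hpoint j
    _ = (S ^ P * ∑' k, F k ^ P) ^ (1 / P) := by
        rw [ENNReal.tsum_mul_left, ENNReal.tsum_comm]
        simp_rw [ENNReal.tsum_mul_right, hcol, ENNReal.tsum_mul_left, ← mul_assoc]
        congr 2
        simpa using (ENNReal.rpow_add_of_nonneg (x := S) (P - 1) 1 (by linarith) zero_le_one).symm
    _ = S * (∑' k, F k ^ P) ^ (1 / P) := by
        rw [ENNReal.mul_rpow_of_nonneg _ _ (by positivity), ← ENNReal.rpow_mul,
          mul_one_div_cancel (by positivity), ENNReal.rpow_one]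

lemma nestNorm_mul_discreteConv_mul_le {G : Type*} [AddGroup G] [Countable G] {p q r : ℝ≥0∞}
    (hp : 1 ≤ p) (hq : 1 ≤ q) (hpqr : p⁻¹ + q⁻¹ = r⁻¹) (c : ℝ≥0∞) (H F F' : G → ℝ≥0∞) :
    nestNorm r (fun j => c * discreteConv H F j * discreteConv H F' j) ≤
      c * (∑' v, H v) ^ 2 * nestNorm p F * nestNorm q F' :=
  calc nestNorm r (fun j => c * discreteConv H F j * discreteConv H F' j)
      ≤ nestNorm p (fun j => c * discreteConv H F j) * nestNorm q (discreteConv H F') :=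
        nestNorm_mul_le (by positivity) (by positivity) hpqr _ _
    _ = c * nestNorm p (discreteConv H F) * nestNorm q (discreteConv H F') := by
        rw [nestNorm_const_mul (by positivity)]
    _ ≤ c * ((∑' v, H v) * nestNorm p F) * ((∑' v, H v) * nestNorm q F') := by
        gcongr
        · exact nestNorm_discreteConv_le hp H F
        · exact nestNorm_discreteConv_le hq H F'
    _ = c * (∑' v, H v) ^ 2 * nestNorm p F * nestNorm q F' := by ring

def intToEuclidean {d : ℕ} (j : Zd d) : EuclideanSpace ℝ (Fin d) :=
  WithLp.toLp 2 fun i => (j i : ℝ)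

lemma norm_intToEuclidean {d : ℕ} (j : Zd d) : ‖intToEuclidean j‖ = znorm j := by
  simp [EuclideanSpace.norm_eq, znorm, intToEuclidean]

lemma intToEuclidean_sub {d : ℕ} (j k : Zd d) :
    intToEuclidean (j - k) = intToEuclidean j - intToEuclidean k := by
  ext i; simp [intToEuclidean]

lemma intToEuclidean_injective {d : ℕ} : Function.Injective (intToEuclidean (d := d)) := by
  intro j k h
  funext i
  have := congrArg (fun x : EuclideanSpace ℝ (Fin d) => x i) h
  simpa [intToEuclidean] using this

open Submodule in
lemma summable_jb_znorm_rpow {d : ℕ} {τ : ℝ} (hτ : (d : ℝ) < τ) :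
    Summable fun v : Zd d => jb (znorm v) ^ (-τ) := by
  let b := (EuclideanSpace.basisFun (Fin d) ℝ).toBasis
  let L := span ℤ (Set.range b)
  have hmem : ∀ v : Zd d, intToEuclidean v ∈ L := fun v => by
    have : intToEuclidean v = ∑ i, (v i) • b i := by
      ext i; simp [intToEuclidean, b, Pi.single_apply]
    rw [this]
    exact sum_mem fun i _ => zsmul_mem (subset_span (Set.mem_range_self i)) _
  have hL : Module.finrank ℤ L = d := by
    rw [ZLattice.rank ℝ L, finrank_euclideanSpace_fin]
  have hsum : Summable fun z : L => ‖z‖ ^ (-τ) :=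
    ZLattice.summable_norm_rpow L (-τ) (by rw [hL]; linarith)
  have hinj : Function.Injective fun v : Zd d => (⟨intToEuclidean v, hmem v⟩ : L) :=
    fun v w h => intToEuclidean_injective (congrArg Subtype.val h)
  refine (hsum.comp_injective hinj).of_norm_bounded_eventually ?_
  filter_upwards [Filter.eventually_cofinite_ne 0] with v hv
  have hpos : 0 < znorm v := by
    rw [← norm_intToEuclidean, norm_pos_iff]
    exact fun h => hv (intToEuclidean_injective (h.trans (by ext i; simp [intToEuclidean])))
  rw [Real.norm_of_nonneg (by positivity [jb_pos (znorm v)])]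
  simpa [norm_intToEuclidean] using
    Real.rpow_le_rpow_of_nonpos hpos (le_jb _) (by linarith [(Nat.cast_nonneg d : (0:ℝ) ≤ d)])

lemma ofReal_norm_le_tensorNorm_mul {d : ℕ} (ω N : ℝ) (Θ : Zd d → Zd d → Zd d → ℂ)
    (j k l : Zd d) :
    ENNReal.ofReal ‖Θ j k l‖ ≤ tensorNorm ω N Θ * ENNReal.ofReal
      (jb (znorm j + znorm k) ^ ω * jb (znorm j + znorm l) ^ ω *
        jb (znorm (j - k) + znorm (j - l)) ^ (-(2 * N))) := by
  have := jb_pos (znorm j + znorm k)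
  have := jb_pos (znorm j + znorm l)
  have := jb_pos (znorm (j - k) + znorm (j - l))
  have hsplit : ‖Θ j k l‖ = ‖Θ j k l‖ * jb (znorm (j - k) + znorm (j - l)) ^ (2 * N) /
      (jb (znorm j + znorm k) ^ ω * jb (znorm j + znorm l) ^ ω) *
      (jb (znorm j + znorm k) ^ ω * jb (znorm j + znorm l) ^ ω *
        jb (znorm (j - k) + znorm (j - l)) ^ (-(2 * N))) := by
    rw [Real.rpow_neg (by positivity)]
    field_simp
  rw [hsplit, ENNReal.ofReal_mul (by positivity)]
  gcongr
  exact le_iSup_of_le j (le_iSup_of_le k (le_iSup_of_le l le_rfl))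

lemma ofReal_mul_norm_Tbil_le {d : ℕ} (Θ : Zd d → Zd d → Zd d → ℂ) (f g : Zd d → ℂ) (j : Zd d)
    {w : ℝ} (hw : 0 ≤ w) {A : ℝ≥0∞} {a b : Zd d → ℝ≥0∞}
    (h : ∀ k l, ENNReal.ofReal (w * ‖Θ j k l‖) ≤ A * a k * b l) :
    ENNReal.ofReal (w * ‖Tbil Θ f g j‖) ≤
      A * (∑' k, a k * ‖f k‖ₑ) * (∑' l, b l * ‖g l‖ₑ) := by
  rw [ENNReal.ofReal_mul hw, ofReal_norm]
  calc ENNReal.ofReal w * ‖Tbil Θ f g j‖ₑ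
      ≤ ENNReal.ofReal w * ∑' k, ∑' l, ‖Θ j k l * f k * g l‖ₑ := by
        gcongr
        exact enorm_tsum_le_tsum_enorm.trans
          (ENNReal.tsum_le_tsum fun k => enorm_tsum_le_tsum_enorm)
    _ = ∑' k, ∑' l, ENNReal.ofReal (w * ‖Θ j k l‖) * ‖f k‖ₑ * ‖g l‖ₑ := by
        simp_rw [← ENNReal.tsum_mul_left, enorm_mul, ENNReal.ofReal_mul hw, ofReal_norm, mul_assoc]
    _ ≤ ∑' k, ∑' l, A * a k * b l * ‖f k‖ₑ * ‖g l‖ₑ := by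
        gcongr with k l
        exact h k l
    _ = A * (∑' k, a k * ‖f k‖ₑ) * (∑' l, b l * ‖g l‖ₑ) := by
        rw [← ENNReal.tsum_mul_left (a := A), ← ENNReal.tsum_mul_right]
        refine tsum_congr fun k => ?_
        rw [← ENNReal.tsum_mul_left]
        exact tsum_congr fun l => by ring

def decayWeight {d : ℕ} (τ : ℝ) (v : Zd d) : ℝ≥0∞ := ENNReal.ofReal (jb (znorm v) ^ (-τ))

def weightedAbs {d : ℕ} (s : ℝ) (f : Zd d → ℂ) (k : Zd d) : ℝ≥0∞ :=
  ENNReal.ofReal (jb (znorm k) ^ s * ‖f k‖)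

lemma wlpNorm_eq_nestNorm_weightedAbs {d : ℕ} (p : ℝ≥0∞) (s : ℝ) (f : Zd d → ℂ) :
    wlpNorm p s f = nestNorm p (weightedAbs s f) := rfl

lemma weightedAbs_eq {d : ℕ} (s : ℝ) (f : Zd d → ℂ) (k : Zd d) :
    weightedAbs s f k = ENNReal.ofReal (jb (znorm k) ^ s) * ‖f k‖ₑ := by
  rw [weightedAbs, ENNReal.ofReal_mul (jb_rpow_pos _ _).le, ofReal_norm]

lemma tsum_decayWeight_ne_top {d : ℕ} {τ : ℝ} (hτ : (d : ℝ) < τ) :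
    ∑' v : Zd d, decayWeight τ v ≠ ∞ := by
  unfold decayWeight
  rw [← ENNReal.ofReal_tsum_of_nonneg (fun v => (jb_rpow_pos _ _).le)
    (summable_jb_znorm_rpow hτ)]
  exact ENNReal.ofReal_ne_top

lemma tsum_decayWeight_ne_zero {d : ℕ} (τ : ℝ) : ∑' v : Zd d, decayWeight τ v ≠ 0 :=
  ((ENNReal.ofReal_pos.2 (jb_rpow_pos _ _)).trans_le
    (ENNReal.le_tsum (0 : Zd d))).ne'

lemma exists_weighted_tensor_bound {d : ℕ} {s₁ s₂ ω N τ : ℝ} (hτ : 0 ≤ τ)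
    (hN : |s₁ + ω| + |s₂ + ω| + 2 * max ω 0 + 2 * τ ≤ 2 * N) :
    ∃ C, 0 < C ∧ ∀ (Θ : Zd d → Zd d → Zd d → ℂ) (j k l : Zd d),
      ENNReal.ofReal (jb (znorm j) ^ (s₁ + s₂) * ‖Θ j k l‖) ≤
        ENNReal.ofReal C * tensorNorm ω N Θ *
          (decayWeight τ (j - k) * ENNReal.ofReal (jb (znorm k) ^ (s₁ + ω))) *
          (decayWeight τ (j - l) * ENNReal.ofReal (jb (znorm l) ^ (s₂ + ω))) := by
  obtain ⟨C, hC, hker⟩ := exists_kernel_bound (E := EuclideanSpace ℝ (Fin d)) hτ hN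
  refine ⟨C, hC, fun Θ j k l => ?_⟩
  have hw := (jb_rpow_pos (znorm j) (s₁ + s₂)).le
  have hjkl := hker (intToEuclidean j) (intToEuclidean k) (intToEuclidean l)
  simp only [← intToEuclidean_sub, norm_intToEuclidean] at hjkl
  calc ENNReal.ofReal (jb (znorm j) ^ (s₁ + s₂) * ‖Θ j k l‖)
      ≤ ENNReal.ofReal (jb (znorm j) ^ (s₁ + s₂)) * (tensorNorm ω N Θ * ENNReal.ofReal
          (jb (znorm j + znorm k) ^ ω * jb (znorm j + znorm l) ^ ω *
            jb (znorm (j - k) + znorm (j - l)) ^ (-(2 * N)))) := by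
        rw [ENNReal.ofReal_mul hw]
        gcongr
        exact ofReal_norm_le_tensorNorm_mul ω N Θ j k l
    _ = tensorNorm ω N Θ * ENNReal.ofReal (jb (znorm j) ^ (s₁ + s₂) *
          (jb (znorm j + znorm k) ^ ω * jb (znorm j + znorm l) ^ ω *
            jb (znorm (j - k) + znorm (j - l)) ^ (-(2 * N)))) := by
        rw [ENNReal.ofReal_mul hw]; ring
    _ ≤ tensorNorm ω N Θ * ENNReal.ofReal (C * (jb (znorm k) ^ (s₁ + ω) *
          jb (znorm (j - k)) ^ (-τ)) * (jb (znorm l) ^ (s₂ + ω) * jb (znorm (j - l)) ^ (-τ))) := by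
        gcongr _ * ENNReal.ofReal ?_
    _ = _ := by
        have := jb_pos (znorm k)
        have := jb_pos (znorm l)
        have := jb_pos (znorm (j - k))
        have := jb_pos (znorm (j - l))
        rw [ENNReal.ofReal_mul (by positivity), ENNReal.ofReal_mul (by positivity),
          ENNReal.ofReal_mul (by positivity), ENNReal.ofReal_mul (by positivity)]
        simp only [decayWeight]
        ring

lemma exists_weighted_Tbil_bound {d : ℕ} {s₁ s₂ ω N τ : ℝ} (hτ : 0 ≤ τ)
    (hN : |s₁ + ω| + |s₂ + ω| + 2 * max ω 0 + 2 * τ ≤ 2 * N) :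
    ∃ C, 0 < C ∧ ∀ (Θ : Zd d → Zd d → Zd d → ℂ) (f g : Zd d → ℂ) (j : Zd d),
      ENNReal.ofReal (jb (znorm j) ^ (s₁ + s₂) * ‖Tbil Θ f g j‖) ≤
        ENNReal.ofReal C * tensorNorm ω N Θ *
          discreteConv (decayWeight τ) (weightedAbs (s₁ + ω) f) j *
          discreteConv (decayWeight τ) (weightedAbs (s₂ + ω) g) j := by
  obtain ⟨C, hC, hbound⟩ := exists_weighted_tensor_bound (d := d) hτ hN
  refine ⟨C, hC, fun Θ f g j => ?_⟩
  simpa only [discreteConv, weightedAbs_eq, mul_assoc] using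
    ofReal_mul_norm_Tbil_le Θ f g j (jb_rpow_pos _ _).le (hbound Θ j)

theorem stmt_2_general {d : ℕ} (s₁ s₂ ω N : ℝ)
    (hN : N > (d : ℝ) + max ω 0 + (|s₁ + ω| + |s₂ + ω|) / 2)
    (p q r : ℝ≥0∞) (hp : 1 ≤ p) (hq : 1 ≤ q)
    (hpqr : p⁻¹ + q⁻¹ = r⁻¹) :
    ∃ C : ℝ, 0 < C ∧ ∀ Θ : Zd d → Zd d → Zd d → ℂ, tensorNorm ω N Θ ≠ ∞ →
      ∀ f g : Zd d → ℂ,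
        wlpNorm r (s₁ + s₂) (Tbil Θ f g) ≤
          ENNReal.ofReal C * tensorNorm ω N Θ *
            wlpNorm p (s₁ + ω) f * wlpNorm q (s₂ + ω) g := by
  obtain ⟨τ, hτd, hNτ⟩ : ∃ τ : ℝ, (d : ℝ) < τ ∧
      |s₁ + ω| + |s₂ + ω| + 2 * max ω 0 + 2 * τ ≤ 2 * N :=
    ⟨N - max ω 0 - (|s₁ + ω| + |s₂ + ω|) / 2, by linarith, by linarith⟩
  obtain ⟨C, hC, hpoint⟩ :=
    exists_weighted_Tbil_bound (d := d) ((Nat.cast_nonneg d).trans hτd.le) hNτ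
  set S := ∑' v : Zd d, decayWeight τ v
  have hS : S ≠ ∞ := tsum_decayWeight_ne_top hτd
  have := ENNReal.toReal_pos (tsum_decayWeight_ne_zero τ) hS
  refine ⟨C * S.toReal ^ 2, by positivity, fun Θ _ f g => ?_⟩
  calc wlpNorm r (s₁ + s₂) (Tbil Θ f g)
      ≤ nestNorm r fun j => ENNReal.ofReal C * tensorNorm ω N Θ *
          discreteConv (decayWeight τ) (weightedAbs (s₁ + ω) f) j *
          discreteConv (decayWeight τ) (weightedAbs (s₂ + ω) g) j :=
        nestNorm_mono r (hpoint Θ f g)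
    _ ≤ ENNReal.ofReal C * tensorNorm ω N Θ * S ^ 2 *
          nestNorm p (weightedAbs (s₁ + ω) f) * nestNorm q (weightedAbs (s₂ + ω) g) :=
        nestNorm_mul_discreteConv_mul_le hp hq hpqr _ _ _ _
    _ = ENNReal.ofReal (C * S.toReal ^ 2) * tensorNorm ω N Θ *
          wlpNorm p (s₁ + ω) f * wlpNorm q (s₂ + ω) g := by
        rw [ENNReal.ofReal_mul hC.le, ENNReal.ofReal_pow ENNReal.toReal_nonneg,
          ENNReal.ofReal_toReal hS, wlpNorm_eq_nestNorm_weightedAbs,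
          wlpNorm_eq_nestNorm_weightedAbs]
        ring

/-- Proposition 1: if `‖Θ‖_{ω,N} < ∞` for some `N > N₀ = d + ω₊ +
(|s₁+ω|+|s₂+ω|)/2`, then `𝒯_Θ : ℓ^p_{s₁+ω} × ℓ^q_{s₂+ω} → ℓ^r_{s₁+s₂}` is bounded, with a
constant depending only on `d, ω, s₁, s₂, N, p, q, r`. -/
theorem stmt_2 {d : ℕ} (hd : 1 ≤ d) (s₁ s₂ ω N : ℝ)
    (hN : N > (d : ℝ) + max ω 0 + (|s₁ + ω| + |s₂ + ω|) / 2)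
    (p q r : ℝ≥0∞) (hp : 1 ≤ p) (hq : 1 ≤ q) (hr : 1 ≤ r)
    (hpqr : p⁻¹ + q⁻¹ = r⁻¹) :
    ∃ C : ℝ, 0 < C ∧ ∀ Θ : Zd d → Zd d → Zd d → ℂ, tensorNorm ω N Θ ≠ ∞ →
      ∀ f g : Zd d → ℂ,
        wlpNorm r (s₁ + s₂) (Tbil Θ f g) ≤
          ENNReal.ofReal C * tensorNorm ω N Θ *
            wlpNorm p (s₁ + ω) f * wlpNorm q (s₂ + ω) g :=
  stmt_2_general s₁ s₂ ω N hN p q r hp hq hpqr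

end
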